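/- Let K be a 2-collapsible simplicial complex on a finite vertex set V and let M be a matroid on V with rank function ρ. If M ⊆ T_1(K), then there exists σ ∈ T_1(K) such that ρ(V∖σ) ≤ 5. -/
import Mathlib


open Finset

variable {V : Type*} [DecidableEq V] [LinearOrder V] [Fintype V]

/-- A (possibly void) simplicial complex: a family of finite sets closed under subsets. -/
def IsComplex {V : Type*} [DecidableEq V] (K : Finset (Finset V)) : Prop :=
  ∀ σ ∈ K, ∀ τ ⊆ σ, τ ∈ K

/-- The faces of `X` which are not faces of `Y` and have cardinality `j + 1`
(i.e. dimension `j`). -/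
abbrev RelFace (X Y : Finset (Finset V)) (j : ℤ) : Type _ :=
  {σ : Finset V // σ ∈ X ∧ σ ∉ Y ∧ (σ.card : ℤ) = j + 1}

/-- The simplicial boundary operator from `i`-dimensional chains of the pair `(X, Y)` to
`j`-dimensional chains; it is the usual boundary operator when `j = i - 1`
(and the zero map otherwise). Signs are determined by the linear order on the vertices. -/
noncomputable def relBoundary (X Y : Finset (Finset V)) (i j : ℤ) :
    (RelFace X Y i → ℝ) →ₗ[ℝ] (RelFace X Y j → ℝ) :=
  Matrix.mulVecLin fun (τ : RelFace X Y j) (σ : RelFace X Y i) =>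
    ∑ v ∈ σ.1, if σ.1.erase v = τ.1 then (-1 : ℝ) ^ (σ.1.filter (· < v)).card else 0

/-- The `j`-th relative simplicial homology group (with ℝ coefficients) of the pair `(X, Y)`:
cycles modulo boundaries, in the chain complex generated by the simplices of `X` not in `Y`. -/
noncomputable abbrev relHomology (X Y : Finset (Finset V)) (j : ℤ) : Type _ :=
  LinearMap.ker (relBoundary X Y j (j - 1)) ⧸
    Submodule.comap (LinearMap.ker (relBoundary X Y j (j - 1))).subtype
      (LinearMap.range (relBoundary X Y (j + 1) j))

/-- The `j`-th reduced simplicial homology group of `K`, with ℝ coefficients.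
(The chain complex is augmented: the empty set is a face of dimension `-1`.) -/
noncomputable abbrev reducedHomology (K : Finset (Finset V)) (j : ℤ) : Type _ :=
  relHomology K ∅ j

/-- The subcomplex of `K` induced by the vertex set `U`. -/
def induced {V : Type*} [DecidableEq V] (K : Finset (Finset V)) (U : Finset V) :
    Finset (Finset V) :=
  K.filter fun σ => σ ⊆ U

/-- `K` is `d`-Leray: every induced subcomplex has trivial reduced homology in
dimensions `d` and higher. -/
def IsLeray (d : ℕ) (K : Finset (Finset V)) : Prop :=
  ∀ (U : Finset V) (i : ℤ), (d : ℤ) ≤ i → Subsingleton (reducedHomology (induced K U) i)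

/-- The complex is acyclic: all reduced homology groups vanish. -/
def IsAcyclic (K : Finset (Finset V)) : Prop :=
  ∀ i : ℤ, -1 ≤ i → Subsingleton (reducedHomology K i)

/-- The Leray number of `K`: the minimal `d` such that `K` is `d`-Leray. -/
noncomputable def lerayNumber (K : Finset (Finset V)) : ℕ :=
  sInf {d : ℕ | IsLeray d K}

/-- The link of a face `τ` in `K`. -/
def link {V : Type*} [DecidableEq V] (K : Finset (Finset V)) (τ : Finset V) :
    Finset (Finset V) :=
  K.filter fun σ => σ ∩ τ = ∅ ∧ σ ∪ τ ∈ K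

/-- The costar of a face `τ` in `K`: all faces not containing `τ`. -/
def costar {V : Type*} [DecidableEq V] (K : Finset (Finset V)) (τ : Finset V) :
    Finset (Finset V) :=
  K.filter fun σ => ¬ τ ⊆ σ

/-- `τ` is a maximal face of `K`. -/
def IsMaximalFace {V : Type*} [DecidableEq V] (K : Finset (Finset V)) (τ : Finset V) : Prop :=
  τ ∈ K ∧ ∀ ρ ∈ K, τ ⊆ ρ → ρ = τ

/-- `σ` is a free face of `K`: it is contained in a unique maximal face of `K`. -/
def IsFreeFace {V : Type*} [DecidableEq V] (K : Finset (Finset V)) (σ : Finset V) : Prop :=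
  σ ∈ K ∧ ∃! τ : Finset V, IsMaximalFace K τ ∧ σ ⊆ τ

/-- `K` is `d`-collapsible: it can be reduced to the void complex by repeatedly removing all
faces containing some free face of size at most `d` (an elementary `d`-collapse). -/
inductive Collapsible {V : Type*} [DecidableEq V] (d : ℕ) : Finset (Finset V) → Prop
  | void : Collapsible d ∅
  | step (K : Finset (Finset V)) (σ : Finset V) : IsFreeFace K σ → σ.card ≤ d →
      Collapsible d (K.filter fun ρ => ¬ σ ⊆ ρ) → Collapsible d K

/-- The `t`-tolerance complex of `K`, with respect to the vertex set `A`: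
all sets of the form `η ∪ τ` with `η ∈ K`, `τ ⊆ A` and `|τ| ≤ t`. -/
def tol {V : Type*} [DecidableEq V] (A : Finset V) (t : ℕ) (K : Finset (Finset V)) :
    Finset (Finset V) :=
  ((A.powerset.filter fun τ => τ.card ≤ t) ×ˢ K).image fun p => p.2 ∪ p.1

/-- `τ` is a missing face of `K`: it is not a face, but all its proper subsets are faces. -/
def IsMissingFace {V : Type*} [DecidableEq V] (K : Finset (Finset V)) (τ : Finset V) : Prop :=
  τ ∉ K ∧ ∀ ρ ⊂ τ, ρ ∈ K

/-- `M` is (the family of independent sets of) a matroid: it contains the empty set, is closed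
under taking subsets, and satisfies the exchange axiom. -/
def IsMatroid {V : Type*} [DecidableEq V] (M : Finset (Finset V)) : Prop :=
  ∅ ∈ M ∧ (∀ A ∈ M, ∀ B ⊆ A, B ∈ M) ∧
    ∀ A ∈ M, ∀ B ∈ M, A.card < B.card → ∃ x ∈ B, x ∉ A ∧ insert x A ∈ M

/-- The rank of `W` in the matroid `M`: the maximum size of a subset of `W` belonging to `M`. -/
def matroidRank {V : Type*} [DecidableEq V] (M : Finset (Finset V)) (W : Finset V) : ℕ :=
  (W.powerset.filter (· ∈ M)).sup Finset.card

section HellyAux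

set_option linter.unusedSectionVars false

variable {V : Type*} [DecidableEq V] [Fintype V]

lemma mem_tol_iff {K : Finset (Finset V)} {t : ℕ} {A : Finset V} :
    A ∈ tol Finset.univ t K ↔ ∃ η ∈ K, η ⊆ A ∧ (A \ η).card ≤ t := by
  unfold tol
  rw [Finset.mem_image]
  constructor
  · rintro ⟨p, hp, rfl⟩
    rw [Finset.mem_product, Finset.mem_filter, Finset.mem_powerset] at hp
    refine ⟨p.2, hp.2, Finset.subset_union_left, le_trans (Finset.card_le_card ?_) hp.1.2⟩
    intro x hx
    rw [Finset.mem_sdiff, Finset.mem_union] at hx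
    tauto
  · rintro ⟨η, hη, hsubA, hc⟩
    refine ⟨(A \ η, η), ?_, Finset.union_sdiff_of_subset hsubA⟩
    rw [Finset.mem_product, Finset.mem_filter, Finset.mem_powerset]
    exact ⟨⟨Finset.subset_univ _, hc⟩, hη⟩

lemma tol_mono {K₁ K₂ : Finset (Finset V)} {t : ℕ} (h : K₁ ⊆ K₂) :
    tol Finset.univ t K₁ ⊆ tol Finset.univ t K₂ := by
  intro A hA
  obtain ⟨η, hη, h1, h2⟩ := mem_tol_iff.1 hA
  exact mem_tol_iff.2 ⟨η, h hη, h1, h2⟩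

lemma isComplex_filter {K : Finset (Finset V)} (hK : IsComplex K) (σ₀ : Finset V) :
    IsComplex (K.filter fun ρ => ¬ σ₀ ⊆ ρ) := by
  intro σ hσ τ hτ
  rw [Finset.mem_filter] at hσ ⊢
  exact ⟨hK σ hσ.1 τ hτ, fun h => hσ.2 (h.trans hτ)⟩

lemma free_face_cover {K : Finset (Finset V)} {σ₀ : Finset V} (hfree : IsFreeFace K σ₀) :
    ∃ τ₀, τ₀ ∈ K ∧ σ₀ ⊆ τ₀ ∧ ∀ η ∈ K, σ₀ ⊆ η → η ⊆ τ₀ := by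
  obtain ⟨hσK, τ₀, ⟨⟨hτK, hτmax⟩, hστ⟩, huniq⟩ := hfree
  refine ⟨τ₀, hτK, hστ, ?_⟩
  intro η hηK hση
  have hne : (K.filter (η ⊆ ·)).Nonempty := ⟨η, Finset.mem_filter.2 ⟨hηK, Finset.Subset.refl _⟩⟩
  obtain ⟨μ, hμmem, hμmax'⟩ := Finset.exists_max_image _ Finset.card hne
  rw [Finset.mem_filter] at hμmem
  have hμM : IsMaximalFace K μ := by
    refine ⟨hμmem.1, fun ρ hρK hμρ => ?_⟩
    exact (Finset.eq_of_subset_of_card_le hμρ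
      (hμmax' ρ (Finset.mem_filter.2 ⟨hρK, hμmem.2.trans hμρ⟩))).symm
  have hμτ : μ = τ₀ := huniq μ ⟨hμM, hση.trans hμmem.2⟩
  rw [← hμτ]
  exact hμmem.2

lemma exists_minimal_nonface_aux (K : Finset (Finset V)) :
    ∀ (n : ℕ) (B : Finset V), B.card ≤ n → B ∉ K →
      ∃ N, N ⊆ B ∧ N ∉ K ∧ ∀ ρ ⊆ N, ρ ≠ N → ρ ∈ K := by
  intro n
  induction n with
  | zero =>
    intro B hB0 hBK
    refine ⟨B, Finset.Subset.refl _, hBK, ?_⟩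
    intro ρ hρ hne
    have hBe : B = ∅ := Finset.card_eq_zero.1 (Nat.le_antisymm hB0 (Nat.zero_le _))
    exact absurd (Finset.subset_empty.1 (hBe ▸ hρ)) (by simpa [hBe] using hne)
  | succ n ih =>
    intro B hBc hBK
    by_cases h : ∀ ρ ⊆ B, ρ ≠ B → ρ ∈ K
    · exact ⟨B, Finset.Subset.refl _, hBK, h⟩
    · push_neg at h
      obtain ⟨ρ, hρB, hρne, hρK⟩ := h
      have hlt : ρ.card ≤ n := by
        have := Finset.card_lt_card (Finset.ssubset_iff_subset_ne.2 ⟨hρB, hρne⟩)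
        omega
      obtain ⟨N, hN1, hN2, hN3⟩ := ih ρ hlt hρK
      exact ⟨N, hN1.trans hρB, hN2, hN3⟩

lemma exists_minimal_nonface {K : Finset (Finset V)} {B : Finset V} (hB : B ∉ K) :
    ∃ N, N ⊆ B ∧ N ∉ K ∧ ∀ ρ ⊆ N, ρ ≠ N → ρ ∈ K :=
  exists_minimal_nonface_aux K B.card B le_rfl hB

/-- In a `d`-collapsible complex, every missing face has at most `d + 1` vertices. -/
lemma missing_face_card_le {d : ℕ} {K : Finset (Finset V)} (hcol : Collapsible d K) :
    IsComplex K → ∀ N : Finset V, N ∉ K → (∀ ρ ⊆ N, ρ ≠ N → ρ ∈ K) → N.card ≤ d + 1 := by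
  induction hcol with
  | void =>
    intro _ N hNK hNmin
    rcases eq_or_ne N ∅ with h | h
    · simp [h]
    · exact absurd (hNmin ∅ (Finset.empty_subset _) (Ne.symm h)) (Finset.notMem_empty _)
  | step K σ₀ hfree hσcard hcol' IH =>
    intro hK N hNK hNmin
    obtain ⟨τ₀, hτK, hστ, hcover⟩ := free_face_cover hfree
    by_contra hbig
    push_neg at hbig
    by_cases hσN : σ₀ ⊆ N
    · have hsd : 1 < (N \ σ₀).card := by
        have h1 := Finset.card_le_card_sdiff_add_card (s := N) (t := σ₀)
        omega
      obtain ⟨x, y, hx, hy, hxy⟩ := Finset.one_lt_card_iff.1 hsd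
      rw [Finset.mem_sdiff] at hx hy
      have hex : N.erase x ∈ K := hNmin _ (Finset.erase_subset _ _)
        (fun h => (Finset.erase_eq_self.1 h) hx.1)
      have hexτ : N.erase x ⊆ τ₀ := hcover _ hex (fun z hz =>
        Finset.mem_erase.2 ⟨fun h => hx.2 (h ▸ hz), hσN hz⟩)
      have hey : N.erase y ∈ K := hNmin _ (Finset.erase_subset _ _)
        (fun h => (Finset.erase_eq_self.1 h) hy.1)
      have heyτ : N.erase y ⊆ τ₀ := hcover _ hey (fun z hz =>
        Finset.mem_erase.2 ⟨fun h => hy.2 (h ▸ hz), hσN hz⟩)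
      have hNτ : N ⊆ τ₀ := by
        intro z hz
        by_cases hzx : z = x
        · exact heyτ (Finset.mem_erase.2 ⟨by rw [hzx]; exact hxy, hz⟩)
        · exact hexτ (Finset.mem_erase.2 ⟨hzx, hz⟩)
      exact hNK (hK τ₀ hτK N hNτ)
    · have hN' : N ∉ K.filter fun ρ => ¬ σ₀ ⊆ ρ := fun h => hNK (Finset.mem_filter.1 h).1
      have hmin' : ∀ ρ ⊆ N, ρ ≠ N → ρ ∈ K.filter fun ρ => ¬ σ₀ ⊆ ρ := by
        intro ρ hρ hne
        exact Finset.mem_filter.2 ⟨hNmin ρ hρ hne, fun hc => hσN (hc.trans hρ)⟩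
      have := IH (isComplex_filter hK σ₀) N hN' hmin'
      omega

lemma helly_tol_main : ∀ {K : Finset (Finset V)}, Collapsible 2 K → IsComplex K →
    ∀ M : Finset (Finset V), IsMatroid M → M ⊆ tol Finset.univ 1 K →
    ∃ σ ∈ tol Finset.univ 1 K, matroidRank M (Finset.univ \ σ) ≤ 5 := by
  intro K hcol
  induction hcol with
  | void =>
    intro _ M hM hsub
    have h0 : tol (Finset.univ : Finset V) 1 (∅ : Finset (Finset V)) = ∅ := by
      simp [tol]
    exact absurd (hsub hM.1) (by rw [h0]; exact Finset.notMem_empty _)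
  | step K σ₀ hfree hσcard hcol' IH =>
    intro hK M hM hsub
    obtain ⟨τ₀, hτK, hστ, hcover⟩ := free_face_cover hfree
    rcases eq_or_ne σ₀ ∅ with hσe | hσne
    · -- the collapse at the empty face: every face of `K` is contained in `τ₀`
      refine ⟨τ₀, mem_tol_iff.2 ⟨τ₀, hτK, Finset.Subset.refl _, by simp⟩, ?_⟩
      unfold matroidRank
      apply Finset.sup_le
      intro B hB
      rw [Finset.mem_filter, Finset.mem_powerset] at hB
      obtain ⟨η, hηK, hηB, hηc⟩ := mem_tol_iff.1 (hsub hB.2)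
      have hητ : η ⊆ τ₀ := hcover _ hηK (by rw [hσe]; exact Finset.empty_subset _)
      have hηe : η = ∅ := by
        rw [Finset.eq_empty_iff_forall_notMem]
        intro x hx
        have h2 := hB.1 (hηB hx)
        rw [Finset.mem_sdiff] at h2
        exact h2.2 (hητ hx)
      rw [hηe, Finset.sdiff_empty] at hηc
      omega
    · by_cases hMK' : M ⊆ tol Finset.univ 1 (K.filter fun ρ => ¬ σ₀ ⊆ ρ)
      · obtain ⟨σ, hσmem, hσrank⟩ := IH (isComplex_filter hK σ₀) M hM hMK'
        exact ⟨σ, tol_mono (Finset.filter_subset _ _) hσmem, hσrank⟩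
      · set K' := K.filter (fun ρ => ¬ σ₀ ⊆ ρ) with hK'def
        -- pick a witness `A ∈ M \ T₁(K')` of minimum cardinality
        set S := M.filter (fun A => A ∉ tol Finset.univ 1 K') with hSdef
        have hSne : S.Nonempty := by
          rw [Finset.not_subset] at hMK'
          obtain ⟨A, hAM, hA⟩ := hMK'
          exact ⟨A, Finset.mem_filter.2 ⟨hAM, hA⟩⟩
        obtain ⟨A, hAS, hAmin⟩ := Finset.exists_min_image S Finset.card hSne
        rw [Finset.mem_filter] at hAS
        obtain ⟨hAM, hAnot⟩ := hAS
        -- every certificate of `A` contains `σ₀`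
        have h_certs : ∀ η ∈ K, η ⊆ A → (A \ η).card ≤ 1 → σ₀ ⊆ η := by
          intro η hηK hηA hc
          by_contra hns
          exact hAnot (mem_tol_iff.2 ⟨η, Finset.mem_filter.2 ⟨hηK, hns⟩, hηA, hc⟩)
        obtain ⟨s₀', hs₀'⟩ := Finset.nonempty_iff_ne_empty.2 hσne
        have hAK : A ∉ K := by
          intro hAK
          have hσA : σ₀ ⊆ A := h_certs A hAK (Finset.Subset.refl _) (by simp)
          have hsd : (A \ A.erase s₀').card ≤ 1 := by
            refine le_trans (Finset.card_le_card ?_) (le_of_eq (Finset.card_singleton s₀'))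
            intro x hx
            rw [Finset.mem_sdiff, Finset.mem_erase] at hx
            rw [Finset.mem_singleton]
            by_contra hne
            exact hx.2 ⟨hne, hx.1⟩
          have := h_certs (A.erase s₀') (hK A hAK _ (Finset.erase_subset _ _))
            (Finset.erase_subset _ _) hsd
          exact (Finset.mem_erase.1 (this hs₀')).1 rfl
        obtain ⟨η₀, hη₀K, hη₀A, hη₀c⟩ := mem_tol_iff.1 (hsub hAM)
        have hσ₀η₀ : σ₀ ⊆ η₀ := h_certs _ hη₀K hη₀A hη₀c
        have hη₀τ : η₀ ⊆ τ₀ := hcover _ hη₀K hσ₀η₀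
        have hne : (A \ η₀).Nonempty := by
          rw [Finset.sdiff_nonempty]
          intro hsub'
          exact hAK (by rw [Finset.Subset.antisymm hsub' hη₀A]; exact hη₀K)
        have hcard1 : (A \ η₀).card = 1 := Nat.le_antisymm hη₀c (Finset.card_pos.2 hne)
        obtain ⟨v, hveq⟩ := Finset.card_eq_one.1 hcard1
        have hvmem : v ∈ A \ η₀ := by rw [hveq]; exact Finset.mem_singleton_self v
        rw [Finset.mem_sdiff] at hvmem
        obtain ⟨hvA, hvη₀⟩ := hvmem
        have hη₀eq : η₀ = A.erase v := by
          apply Finset.Subset.antisymm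
          · intro x hx
            exact Finset.mem_erase.2 ⟨fun h => hvη₀ (h ▸ hx), hη₀A hx⟩
          · intro x hx
            rw [Finset.mem_erase] at hx
            by_contra hxη
            have hxv : x ∈ A \ η₀ := Finset.mem_sdiff.2 ⟨hx.2, hxη⟩
            rw [hveq, Finset.mem_singleton] at hxv
            exact hx.1 hxv
        have hAvτ : A.erase v ⊆ τ₀ := hη₀eq ▸ hη₀τ
        have hvτ : v ∉ τ₀ := by
          intro hvτ
          apply hAK
          apply hK τ₀ hτK
          intro x hx
          by_cases hxv : x = v
          · rw [hxv]; exact hvτ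
          · exact hAvτ (Finset.mem_erase.2 ⟨hxv, hx⟩)
        have hσ₀A : σ₀ ⊆ A := hσ₀η₀.trans hη₀A
        have hvσ₀ : v ∉ σ₀ := fun h => hvη₀ (hσ₀η₀ h)
        have hAs : ∀ s ∈ σ₀, A.erase s ∉ K := by
          intro s hs hKe
          have hsd : (A \ A.erase s).card ≤ 1 := by
            refine le_trans (Finset.card_le_card ?_) (le_of_eq (Finset.card_singleton s))
            intro x hx
            rw [Finset.mem_sdiff, Finset.mem_erase] at hx
            rw [Finset.mem_singleton]
            by_contra hxs
            exact hx.2 ⟨hxs, hx.1⟩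
          have := h_certs _ hKe (Finset.erase_subset _ _) hsd
          exact (Finset.mem_erase.1 (this hs)).1 rfl
        -- `A` cannot be extended by any vertex outside `τ₀ ∪ {v}`
        have hNoExt : ∀ y, y ∉ τ₀ → y ≠ v → insert y A ∉ tol Finset.univ 1 K := by
          intro y hyτ hyv hmem
          obtain ⟨η, hηK, hηsub, hηc⟩ := mem_tol_iff.1 hmem
          by_cases hσ₀η : σ₀ ⊆ η
          · have hητ : η ⊆ τ₀ := hcover _ hηK hσ₀η
            have hpair : ({v, y} : Finset V) ⊆ insert y A \ η := by
              intro x hx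
              rw [Finset.mem_insert, Finset.mem_singleton] at hx
              rcases hx with rfl | rfl
              · exact Finset.mem_sdiff.2 ⟨Finset.mem_insert_of_mem hvA,
                  fun h => hvτ (hητ h)⟩
              · exact Finset.mem_sdiff.2 ⟨Finset.mem_insert_self _ _,
                  fun h => hyτ (hητ h)⟩
            have h2 : 2 ≤ (insert y A \ η).card := by
              have hcc := Finset.card_le_card hpair
              rwa [Finset.card_pair (fun h => hyv h.symm)] at hcc
            omega
          · obtain ⟨s, hsσ, hsη⟩ := Finset.not_subset.1 hσ₀η
            have hAes : A.erase s ⊆ η := by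
              intro x hx
              rw [Finset.mem_erase] at hx
              by_contra hxη
              have hxd : x ∈ insert y A \ η :=
                Finset.mem_sdiff.2 ⟨Finset.mem_insert_of_mem hx.2, hxη⟩
              have hsd : s ∈ insert y A \ η :=
                Finset.mem_sdiff.2 ⟨Finset.mem_insert_of_mem (hσ₀A hsσ), hsη⟩
              exact hx.1 (Finset.card_le_one.1 hηc x hxd s hsd)
            exact hAs s hsσ (hK η hηK _ hAes)
        -- the vertex set `Y = A \ (σ₀ ∪ {v})`
        set Y := (A \ σ₀).erase v with hYdef
        have hYA : Y ⊆ A := (Finset.erase_subset _ _).trans Finset.sdiff_subset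
        have hYσ₀ : ∀ p ∈ Y, p ∉ σ₀ := by
          intro p hp
          exact (Finset.mem_sdiff.1 (Finset.mem_of_mem_erase hp)).2
        have hYv : ∀ p ∈ Y, p ≠ v := fun p hp => (Finset.mem_erase.1 hp).1
        have hcard_sdiff : (A \ σ₀).card + σ₀.card = A.card :=
          Finset.card_sdiff_add_card_eq_card hσ₀A
        have hvAσ : v ∈ A \ σ₀ := Finset.mem_sdiff.2 ⟨hvA, hvσ₀⟩
        have hcardY : Y.card + 1 = (A \ σ₀).card := Finset.card_erase_add_one hvAσ
        -- a small missing face inside `A \ {s}` containing `v`, for each `s ∈ σ₀`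
        have hNs : ∀ s ∈ σ₀, ∃ N, N ⊆ A.erase s ∧ N ∉ K ∧
            (∀ ρ ⊆ N, ρ ≠ N → ρ ∈ K) ∧ N.card ≤ 3 ∧ v ∈ N := by
          intro s hs
          obtain ⟨N, hNsub, hNK, hNmin⟩ := exists_minimal_nonface (hAs s hs)
          have hN3 : N.card ≤ 3 :=
            missing_face_card_le (Collapsible.step K σ₀ hfree hσcard hcol') hK N hNK hNmin
          refine ⟨N, hNsub, hNK, hNmin, hN3, ?_⟩
          by_contra hvN
          apply hNK
          apply hK τ₀ hτK
          intro x hx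
          have hxA := hNsub hx
          rw [Finset.mem_erase] at hxA
          exact hAvτ (Finset.mem_erase.2 ⟨fun h => hvN (h ▸ hx), hxA.2⟩)
        -- each `p ∈ Y` can be certified after deleting some `s ∈ σ₀`
        have key : ∀ p ∈ Y, ∃ s ∈ σ₀, (A.erase p).erase s ∈ K := by
          intro p hpY
          have hpA : p ∈ A := hYA hpY
          have h1 : A.erase p ∈ M := hM.2.1 A hAM _ (Finset.erase_subset _ _)
          have h2 : A.erase p ∈ tol Finset.univ 1 K' := by
            by_contra h
            have hmem : A.erase p ∈ S := Finset.mem_filter.2 ⟨h1, h⟩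
            have hge := hAmin _ hmem
            rw [Finset.card_erase_of_mem hpA] at hge
            have h0 : 0 < A.card := Finset.card_pos.2 ⟨p, hpA⟩
            omega
          obtain ⟨ζ, hζK', hζsub, hζc⟩ := mem_tol_iff.1 h2
          rw [hK'def, Finset.mem_filter] at hζK'
          obtain ⟨hζK, hζσ⟩ := hζK'
          obtain ⟨s, hsσ, hsζ⟩ := Finset.not_subset.1 hζσ
          refine ⟨s, hsσ, hK ζ hζK _ ?_⟩
          intro x hx
          rw [Finset.mem_erase, Finset.mem_erase] at hx
          have hxs : x ≠ s := hx.1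
          have hxp : x ≠ p := hx.2.1
          have hxA : x ∈ A := hx.2.2
          by_contra hxζ
          have hxd : x ∈ A.erase p \ ζ :=
            Finset.mem_sdiff.2 ⟨Finset.mem_erase.2 ⟨hxp, hxA⟩, hxζ⟩
          have hspne : s ≠ p := fun h => hYσ₀ p hpY (h ▸ hsσ)
          have hsd : s ∈ A.erase p \ ζ :=
            Finset.mem_sdiff.2 ⟨Finset.mem_erase.2 ⟨hspne, hσ₀A hsσ⟩, hsζ⟩
          exact hxs (Finset.card_le_one.1 hζc x hxd s hsd)
        -- |Y| ≤ 2
        have hYle : Y.card ≤ 2 := by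
          by_contra hY3
          push_neg at hY3
          obtain ⟨P3, hP3Y, hP3card⟩ := Finset.exists_subset_card_eq (by omega : 3 ≤ Y.card)
          obtain ⟨p₁, p₂, p₃, h12, h13, h23, hPeq⟩ := Finset.card_eq_three.1 hP3card
          have hp₁Y : p₁ ∈ Y := hP3Y (by rw [hPeq]; simp)
          have hp₂Y : p₂ ∈ Y := hP3Y (by rw [hPeq]; simp)
          have hp₃Y : p₃ ∈ Y := hP3Y (by rw [hPeq]; simp)
          obtain ⟨s₁, hs₁σ, hζ₁⟩ := key p₁ hp₁Y
          obtain ⟨s₂, hs₂σ, hζ₂⟩ := key p₂ hp₂Y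
          obtain ⟨s₃, hs₃σ, hζ₃⟩ := key p₃ hp₃Y
          have final : ∀ q₁ q₂ q₃ t₁ t₂ : V, q₁ ∈ Y → q₂ ∈ Y → q₃ ∈ Y →
              q₁ ≠ q₂ → q₃ ≠ q₁ → q₃ ≠ q₂ → t₁ ∈ σ₀ → t₂ ∈ σ₀ →
              (A.erase q₁).erase t₁ ∈ K → (A.erase q₂).erase t₁ ∈ K →
              (A.erase q₃).erase t₂ ∈ K → False := by
            intro q₁ q₂ q₃ t₁ t₂ hq₁Y hq₂Y hq₃Y hq12 hq31 hq32 ht₁ ht₂ hζq₁ hζq₂ hζq₃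
            obtain ⟨N, hNsub, hNK, hNmin, hN3, hvN⟩ := hNs t₁ ht₁
            have hqN : ∀ q, q ∈ Y → (A.erase q).erase t₁ ∈ K → q ∈ N := by
              intro q hqY hζ
              by_contra hqN'
              apply hNK
              apply hK _ hζ
              intro x hx
              have hxA := hNsub hx
              rw [Finset.mem_erase] at hxA
              exact Finset.mem_erase.2 ⟨hxA.1,
                Finset.mem_erase.2 ⟨fun h => hqN' (h ▸ hx), hxA.2⟩⟩
            have hq₁N := hqN q₁ hq₁Y hζq₁
            have hq₂N := hqN q₂ hq₂Y hζq₂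
            have hvq₁ : v ≠ q₁ := fun h => hYv q₁ hq₁Y h.symm
            have hvq₂ : v ≠ q₂ := fun h => hYv q₂ hq₂Y h.symm
            have hsubN : ({v, q₁, q₂} : Finset V) ⊆ N := by
              intro x hx
              rw [Finset.mem_insert, Finset.mem_insert, Finset.mem_singleton] at hx
              rcases hx with hxv | hx1 | hx2
              · rw [hxv]; exact hvN
              · rw [hx1]; exact hq₁N
              · rw [hx2]; exact hq₂N
            have hc3 : ({v, q₁, q₂} : Finset V).card = 3 := by
              rw [Finset.card_insert_of_notMem (by
                rw [Finset.mem_insert, Finset.mem_singleton]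
                push_neg
                exact ⟨hvq₁, hvq₂⟩), Finset.card_pair hq12]
            have hNeq : N = {v, q₁, q₂} :=
              (Finset.eq_of_subset_of_card_le hsubN (by rw [hc3]; exact hN3)).symm
            apply hNK
            apply hK _ hζq₃
            intro x hx
            rw [hNeq, Finset.mem_insert, Finset.mem_insert, Finset.mem_singleton] at hx
            rcases hx with hxv | hx1 | hx2
            · rw [hxv]
              exact Finset.mem_erase.2 ⟨fun h => hvσ₀ (h ▸ ht₂),
                Finset.mem_erase.2 ⟨fun h => hYv q₃ hq₃Y h.symm, hvA⟩⟩
            · rw [hx1]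
              exact Finset.mem_erase.2 ⟨fun h => hYσ₀ q₁ hq₁Y (h ▸ ht₂),
                Finset.mem_erase.2 ⟨fun h => hq31 h.symm, hYA hq₁Y⟩⟩
            · rw [hx2]
              exact Finset.mem_erase.2 ⟨fun h => hYσ₀ q₂ hq₂Y (h ▸ ht₂),
                Finset.mem_erase.2 ⟨fun h => hq32 h.symm, hYA hq₂Y⟩⟩
          by_cases h12' : s₁ = s₂
          · exact final p₁ p₂ p₃ s₁ s₃ hp₁Y hp₂Y hp₃Y h12 (Ne.symm h13) (Ne.symm h23)
              hs₁σ hs₃σ hζ₁ (by rw [h12']; exact hζ₂) hζ₃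
          · by_cases h13' : s₁ = s₃
            · exact final p₁ p₃ p₂ s₁ s₂ hp₁Y hp₃Y hp₂Y h13 (Ne.symm h12) h23
                hs₁σ hs₂σ hζ₁ (by rw [h13']; exact hζ₃) hζ₂
            · by_cases h23' : s₂ = s₃
              · exact final p₂ p₃ p₁ s₂ s₁ hp₂Y hp₃Y hp₁Y h23 h12 h13
                  hs₂σ hs₁σ hζ₂ (by rw [h23']; exact hζ₃) hζ₁
              · have hsub3 : ({s₁, s₂, s₃} : Finset V) ⊆ σ₀ := by
                  intro x hx
                  rw [Finset.mem_insert, Finset.mem_insert, Finset.mem_singleton] at hx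
                  rcases hx with hx | hx | hx
                  · rw [hx]; exact hs₁σ
                  · rw [hx]; exact hs₂σ
                  · rw [hx]; exact hs₃σ
                have hc3' : ({s₁, s₂, s₃} : Finset V).card = 3 := by
                  rw [Finset.card_insert_of_notMem (by
                    rw [Finset.mem_insert, Finset.mem_singleton]
                    push_neg
                    exact ⟨h12', h13'⟩), Finset.card_pair h23']
                have hle := Finset.card_le_card hsub3
                rw [hc3'] at hle
                omega
        have hA5 : A.card ≤ 5 := by omega
        -- conclude with `σ = τ₀ ∪ {v}`
        refine ⟨insert v τ₀, mem_tol_iff.2 ⟨τ₀, hτK, Finset.subset_insert _ _, ?_⟩, ?_⟩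
        · refine le_trans (Finset.card_le_card ?_) (le_of_eq (Finset.card_singleton v))
          intro x hx
          rw [Finset.mem_sdiff, Finset.mem_insert] at hx
          rw [Finset.mem_singleton]
          tauto
        · unfold matroidRank
          apply Finset.sup_le
          intro B hB
          rw [Finset.mem_filter, Finset.mem_powerset] at hB
          obtain ⟨hBsub, hBM⟩ := hB
          by_contra hB6
          push_neg at hB6
          have hlt : A.card < B.card := by omega
          obtain ⟨y, hyB, hyA, hins⟩ := hM.2.2 A hAM B hBM hlt
          have hy := hBsub hyB
          rw [Finset.mem_sdiff, Finset.mem_insert] at hy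
          push_neg at hy
          exact hNoExt y hy.2.2 hy.2.1 (hsub hins)

end HellyAux

/-- Let `K` be a `2`-collapsible complex on `V` and `M` a matroid on `V` with rank function
`ρ`. If `M ⊆ T_1(K)`, then there is a face `σ ∈ T_1(K)` with `ρ(V∖σ) ≤ 5`. -/
theorem tolerant_topological_colorful_helly_two_collapsible
    {V : Type*} [DecidableEq V] [LinearOrder V] [Fintype V]
    (K M : Finset (Finset V)) (hK : IsComplex K) (hcol : Collapsible 2 K)
    (hM : IsMatroid M) (hsub : M ⊆ tol Finset.univ 1 K) :
    ∃ σ ∈ tol Finset.univ 1 K, matroidRank M (Finset.univ \ σ) ≤ 5 := by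
  exact helly_tol_main hcol hK M hM hsub
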